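/- Let f be a nonconstant map in C(Σ, M). Then there exist ε > 0 and a compact subset K of ℂ × ℂ contained in (ℂ \ {0}) × ℂ such that for every h ∈ C(Σ, M) with d(h, f) < ε and every pair (a, c) with a ≠ 0 and (a, c) ∉ K, one has d(h ∘ g_{a,c}, f) ≥ ε. In particular, for every such (a, c) outside K the reparametrized map f ∘ g_{a,c} satisfies d(f ∘ g_{a,c}, f) ≥ ε. -/

import Mathlib

open OnePoint Metric Filter Set Topology

/-- The reparametrization `g_{a,c} : Σ → Σ` of the Riemann sphere `Σ = OnePoint ℂ`
extending `z ↦ a · (z − c)` on `ℂ` and fixing the point at infinity. -/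
noncomputable def gAff (a c : ℂ) (ha : a ≠ 0) : C(OnePoint ℂ, OnePoint ℂ) where
  toFun := OnePoint.map (fun z => a * (z - c))
  continuous_toFun :=
    (Homeomorph.onePointCongr ((Homeomorph.subRight c).trans (Homeomorph.mulLeft₀ a ha))).continuous

/-!
A nonconstant `f` takes a value `f z₁ ≠ f ∞` at some finite point `z₁`; let
`4ε = dist (f z₁) (f ∞)`. By continuity `f` is `ε`-close to `f z₁` on a disc `closedBall z₁ ρ`
and `ε`-close to `f ∞` outside `closedBall 0 R`. If `f ∘ g` is uniformly `2ε`-close to `f` for an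
affine map `g`, then neither `g` nor `g⁻¹` can move a point of the disc outside `closedBall 0 R`.
Hence both `g` and `g⁻¹` have dilation factor at most `R / ρ`, and `g⁻¹ z₁` stays in
`closedBall 0 R`, which confines `(a, c)` to a compact subset of `ℂˣ × ℂ`. Finally, if `h` and
`h ∘ g` are both `ε`-close to `f`, then `f ∘ g` is `2ε`-close to `f`.
-/

theorem OnePoint.exists_coe_apply_ne_infty {X Y : Type*} {f : OnePoint X → Y}
    (hf : ∃ x y, f x ≠ f y) : ∃ z : X, f z ≠ f ∞ := by
  by_contra! h
  obtain ⟨x, y, hxy⟩ := hf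
  have hconst : ∀ u : OnePoint X, f u = f ∞ := fun u => u.rec rfl h
  exact hxy ((hconst x).trans (hconst y).symm)

theorem OnePoint.exists_pos_forall_dist_lt_of_continuousAt_infty {E M : Type*}
    [NormedAddCommGroup E] [ProperSpace E] [PseudoMetricSpace M] {F : OnePoint E → M}
    (hF : ContinuousAt F ∞) {ε : ℝ} (hε : 0 < ε) :
    ∃ R > 0, ∀ z : E, z ∉ closedBall 0 R → dist (F z) (F ∞) < ε := by
  have h : Tendsto (fun z : E => F z) (Bornology.cobounded E) (𝓝 (F ∞)) := by
    rw [cobounded_eq_cocompact, ← coclosedCompact_eq_cocompact]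
    exact hF.tendsto.comp tendsto_coe_infty
  simpa using ((atTop_basis_Ioi' 0).cobounded_of_norm.tendsto_iff nhds_basis_ball).1 h ε hε

theorem ContinuousMap.dist_apply_comp_le {X M : Type*} [TopologicalSpace X] [CompactSpace X]
    [PseudoMetricSpace M] (f h : C(X, M)) (g : C(X, X)) (x : X) :
    dist (f (g x)) (f x) ≤ dist h f + dist (h.comp g) f :=
  calc dist (f (g x)) (f x) ≤ dist (f (g x)) (h (g x)) + dist (h (g x)) (f x) := dist_triangle ..
    _ ≤ dist h f + dist (h.comp g) f := by
      gcongr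
      · exact (dist_apply_le_dist (g x)).trans_eq (dist_comm f h)
      · exact dist_apply_le_dist (f := h.comp g) x

theorem mapsTo_of_forall_dist_lt {X M : Type*} [PseudoMetricSpace M] {F : X → M} {φ : X → X}
    {U V : Set X} {y m : M} {ε : ℝ} (hU : ∀ x ∈ U, dist (F x) y < ε)
    (hV : ∀ x ∉ V, dist (F x) m < ε) (hym : 4 * ε ≤ dist y m)
    (hφ : ∀ x ∈ U, dist (F (φ x)) (F x) < 2 * ε) : MapsTo φ U V := by
  intro x hx
  by_contra hφx
  have := dist_triangle4 y (F x) (F (φ x)) m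
  rw [dist_comm y (F x), dist_comm (F x) (F (φ x))] at this
  linarith [hU x hx, hφ x hx, hV _ hφx]

theorem norm_mul_le_of_mapsTo_closedBall {φ : ℂ → ℂ} {a z₀ : ℂ} {ρ R : ℝ}
    (hφ : ∀ z w, φ z - φ w = a * (z - w)) (hρ : 0 ≤ ρ)
    (h : MapsTo φ (closedBall z₀ ρ) (closedBall 0 R)) : ‖a‖ * ρ ≤ R := by
  have hp := mem_closedBall_zero_iff.1 (@h (z₀ + ρ) (by simp [abs_of_nonneg hρ]))
  have hq := mem_closedBall_zero_iff.1 (@h (z₀ - ρ) (by simp [abs_of_nonneg hρ]))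
  have hdiff := norm_sub_le (φ (z₀ + ρ)) (φ (z₀ - ρ))
  rw [hφ, show z₀ + ρ - (z₀ - ρ) = 2 * (ρ : ℂ) by ring, norm_mul, norm_mul,
    Complex.norm_real, Real.norm_of_nonneg hρ] at hdiff
  norm_num at hdiff
  linarith

section AffineBox

def affineBox (z₁ : ℂ) (ρ R : ℝ) : Set (ℂ × ℂ) :=
  (closedBall 0 (R / ρ) \ ball 0 (ρ / R)) ×ˢ closedBall 0 (R + R / ρ * ‖z₁‖)

variable {M : Type*} [PseudoMetricSpace M] {F : ℂ → M} {y m : M} {z₁ a c : ℂ} {ε ρ R : ℝ}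

theorem isCompact_affineBox : IsCompact (affineBox z₁ ρ R) :=
  ((isCompact_closedBall _ _).diff isOpen_ball).prod (isCompact_closedBall _ _)

theorem affineBox_subset (hρ : 0 < ρ) (hR : 0 < R) :
    affineBox z₁ ρ R ⊆ ({0}ᶜ : Set ℂ) ×ˢ (univ : Set ℂ) :=
  prod_mono (fun _ ha h0 => ha.2 (by simp_all [div_pos hρ hR])) (subset_univ _)

theorem affine_bounds_of_forall_dist_lt (hz₁ : ∀ z ∈ closedBall z₁ ρ, dist (F z) y < ε)
    (hR : ∀ z ∉ closedBall 0 R, dist (F z) m < ε) (hym : 4 * ε ≤ dist y m) (hρ : 0 ≤ ρ)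
    (ha : a ≠ 0) (hF : ∀ z, dist (F (a * (z - c))) (F z) < 2 * ε) :
    ‖a‖ * ρ ≤ R ∧ ‖a⁻¹‖ * ρ ≤ R ∧ ‖a⁻¹ * z₁ + c‖ ≤ R := by
  have hfwd : MapsTo (fun z => a * (z - c)) (closedBall z₁ ρ) (closedBall 0 R) :=
    mapsTo_of_forall_dist_lt hz₁ hR hym fun z _ => hF z
  have hbwd : MapsTo (fun w => a⁻¹ * w + c) (closedBall z₁ ρ) (closedBall 0 R) := by
    refine mapsTo_of_forall_dist_lt hz₁ hR hym fun w _ => ?_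
    rw [dist_comm]
    simpa [ha] using hF (a⁻¹ * w + c)
  refine ⟨norm_mul_le_of_mapsTo_closedBall (fun z w => by ring) hρ hfwd,
    norm_mul_le_of_mapsTo_closedBall (fun z w => by ring) hρ hbwd, ?_⟩
  simpa using hbwd (mem_closedBall_self hρ)

theorem mem_affineBox_of_bounds (hρ : 0 < ρ) (ha : a ≠ 0) (hfwd : ‖a‖ * ρ ≤ R)
    (hbwd : ‖a⁻¹‖ * ρ ≤ R) (hc : ‖a⁻¹ * z₁ + c‖ ≤ R) :
    (a, c) ∈ affineBox z₁ ρ R := by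
  have ha' : 0 < ‖a‖ := norm_pos_iff.2 ha
  have hR : 0 < R := (mul_pos (norm_pos_iff.2 (inv_ne_zero ha)) hρ).trans_le hbwd
  have hinv : ‖a⁻¹‖ ≤ R / ρ := (le_div_iff₀ hρ).2 hbwd
  refine ⟨⟨mem_closedBall_zero_iff.2 ((le_div_iff₀ hρ).2 hfwd), ?_⟩, mem_closedBall_zero_iff.2 ?_⟩
  · rw [mem_ball_zero_iff, not_lt, div_le_iff₀ hR]
    rw [norm_inv, inv_mul_le_iff₀ ha'] at hbwd
    linarith
  · calc ‖c‖ ≤ ‖a⁻¹ * z₁ + c‖ + ‖a⁻¹ * z₁‖ := by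
          simpa using norm_sub_le (a⁻¹ * z₁ + c) (a⁻¹ * z₁)
      _ ≤ R + R / ρ * ‖z₁‖ := by
          rw [norm_mul]
          gcongr

end AffineBox

theorem orbit_never_returns_affine_general {M : Type*} [MetricSpace M]
    (f : C(OnePoint ℂ, M)) (hf : ∃ x y, f x ≠ f y) :
    ∃ ε > 0, ∃ K : Set (ℂ × ℂ), IsCompact K ∧
      K ⊆ ({0}ᶜ : Set ℂ) ×ˢ (Set.univ : Set ℂ) ∧
      (∀ h : C(OnePoint ℂ, M), dist h f < ε →
        ∀ (a c : ℂ) (ha : a ≠ 0), (a, c) ∉ K → ε ≤ dist (h.comp (gAff a c ha)) f) ∧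
      (∀ (a c : ℂ) (ha : a ≠ 0), (a, c) ∉ K → ε ≤ dist (f.comp (gAff a c ha)) f) := by
  obtain ⟨z₁, hz₁⟩ := exists_coe_apply_ne_infty hf
  set ε := dist (f z₁) (f ∞) / 4 with hε_def
  have hε : 0 < ε := div_pos (dist_pos.2 hz₁) four_pos
  obtain ⟨R, hR, hRtail⟩ :=
    exists_pos_forall_dist_lt_of_continuousAt_infty f.continuous.continuousAt hε
  obtain ⟨ρ, hρ, hρdisc⟩ : ∃ ρ > 0, ∀ z ∈ closedBall z₁ ρ, dist (f z) (f z₁) < ε := by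
    simpa using (nhds_basis_closedBall.tendsto_iff nhds_basis_ball).1
      (f.continuous.comp continuous_coe).continuousAt ε hε
  have hK : ∀ h : C(OnePoint ℂ, M), dist h f < ε →
      ∀ (a c : ℂ) (ha : a ≠ 0), (a, c) ∉ affineBox z₁ ρ R → ε ≤ dist (h.comp (gAff a c ha)) f := by
    intro h hh a c ha hac
    by_contra! hlt
    obtain ⟨hfwd, hbwd, hc⟩ := affine_bounds_of_forall_dist_lt hρdisc hRtail (by linarith) hρ.le ha
      fun z => (f.dist_apply_comp_le h (gAff a c ha) z).trans_lt (by linarith)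
    exact hac (mem_affineBox_of_bounds hρ ha hfwd hbwd hc)
  exact ⟨ε, hε, affineBox z₁ ρ R, isCompact_affineBox, affineBox_subset hρ hR, hK,
    fun a c ha => hK f (by rwa [dist_self]) a c ha⟩

/-- For a nonconstant continuous map `f : Σ → M`, the affine-group orbit of any map near `f`
never returns to a small neighbourhood of `f` outside a compact set of reparametrizations; in
particular the orbit of `f` itself never returns to the `ε`-neighbourhood of `f`. -/
theorem orbit_never_returns_affine {M : Type*} [MetricSpace M] [CompactSpace M]
    (f : C(OnePoint ℂ, M)) (hf : ∃ x y, f x ≠ f y) :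
    ∃ ε > 0, ∃ K : Set (ℂ × ℂ), IsCompact K ∧
      K ⊆ ({0}ᶜ : Set ℂ) ×ˢ (Set.univ : Set ℂ) ∧
      (∀ h : C(OnePoint ℂ, M), dist h f < ε →
        ∀ (a c : ℂ) (ha : a ≠ 0), (a, c) ∉ K → ε ≤ dist (h.comp (gAff a c ha)) f) ∧
      (∀ (a c : ℂ) (ha : a ≠ 0), (a, c) ∉ K → ε ≤ dist (f.comp (gAff a c ha)) f) :=
  orbit_never_returns_affine_general f hf
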